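/- Let n = 2 and let S be a Hermitian 2×2 complex matrix (S = conj(S)ᵀ), and set M := ((E,S),(0,E)) ∈ U(2,2), where E is the 2×2 identity, and I := ((0,−E),(E,0)). Then w(I,M) = 0 if tr(S) ≥ 0, and w(I,M) = −1 if tr(S) < 0. -/

import Mathlib

noncomputable section
open Matrix Complex
open scoped ComplexOrder

/-- Complex 2n×2n matrices, written in n×n blocks. -/
abbrev HMat (n : ℕ) : Type := Matrix (Fin n ⊕ Fin n) (Fin n ⊕ Fin n) ℂ

/-- The standard alternating matrix I = ((0,-E),(E,0)). -/
def Imat (n : ℕ) : HMat n := Matrix.fromBlocks 0 (-1) 1 0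

/-- The unitary group U(n,n). -/
def UGrp (n : ℕ) : Set (HMat n) := {M | Mᴴ * Imat n * M = Imat n}

/-- The Hermitian upper half-plane: Z = X + iY with X Hermitian and
Y = (Z - Zᴴ)/(2i) Hermitian positive definite. -/
def UHP (n : ℕ) : Set (Matrix (Fin n) (Fin n) ℂ) :=
  {Z | ((2 * Complex.I)⁻¹ • (Z - Zᴴ)).PosDef}

/-- The action M⟨Z⟩ = (AZ+B)(CZ+D)⁻¹. -/
def matAct {n : ℕ} (M : HMat n) (Z : Matrix (Fin n) (Fin n) ℂ) :
    Matrix (Fin n) (Fin n) ℂ :=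
  (M.toBlocks₁₁ * Z + M.toBlocks₁₂) * (M.toBlocks₂₁ * Z + M.toBlocks₂₂)⁻¹

/-- The automorphy factor J(M,Z) = det(CZ+D). -/
def Jfac {n : ℕ} (M : HMat n) (Z : Matrix (Fin n) (Fin n) ℂ) : ℂ :=
  (M.toBlocks₂₁ * Z + M.toBlocks₂₂).det

/-- The distinguished point iE of the upper half-plane. -/
def iE (n : ℕ) : Matrix (Fin n) (Fin n) ℂ := Complex.I • 1

/-- `L` is the continuous choice of the argument of J(M,Z), normalized so that
`L M (iE)` is the principal value. -/
def IsArgOfJ (n : ℕ) (L : HMat n → Matrix (Fin n) (Fin n) ℂ → ℝ) : Prop :=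
  ∀ M ∈ UGrp n, ContinuousOn (L M) (UHP n) ∧
    (∀ Z ∈ UHP n,
      Complex.exp (Complex.I * (L M Z : ℝ)) = Jfac M Z / ((‖Jfac M Z‖ : ℝ) : ℂ)) ∧
    L M (iE n) ∈ Set.Ioc (-Real.pi) Real.pi

/-- w(M,N;Z) = (1/2π)(L(MN,Z) - L(M,N⟨Z⟩) - L(N,Z)). -/
def wAt {n : ℕ} (L : HMat n → Matrix (Fin n) (Fin n) ℂ → ℝ)
    (M N : HMat n) (Z : Matrix (Fin n) (Fin n) ℂ) : ℝ :=
  (L (M * N) Z - L M (matAct N Z) - L N Z) / (2 * Real.pi)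

/-- The cocycle w(M,N), i.e. the common value of w(M,N;Z), evaluated at Z = iE. -/
def wcoc {n : ℕ} (L : HMat n → Matrix (Fin n) (Fin n) ℂ → ℝ) (M N : HMat n) : ℝ :=
  wAt L M N (iE n)

/-!
Along the path `t ↦ iE + t • S` the determinant `det (iE + t • S) = (t²λ₁λ₂ - 1) + i t (λ₁ + λ₂)`,
with `λ₁, λ₂` the eigenvalues of `S`, never meets the closed positive real axis. Hence the
continuous argument `L(I, ·)`, which is `π` at `iE`, equals `π + arg (-det)` all along the path.
As `J(M, ·) = 1` and `J(IM, Z) = det (Z + S)`, this gives `2π w(I, M) = arg z - arg (-z) - π`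
for `z = det (iE + S)`, and `arg z - arg (-z)` is `π` or `-π` according to the sign of
`Im z = tr S`.
-/

open Set
open scoped Real

theorem eq_arg_of_exp_I_mul_eq {x : ℝ} {z : ℂ} (hx : x ∈ Ioc (-π) π)
    (h : exp (I * x) = z / ((‖z‖ : ℝ) : ℂ)) : x = arg z := by
  have hz : z ≠ 0 := by
    rintro rfl
    simp [exp_ne_zero] at h
  calc x = arg (exp (x * I)) := by rw [exp_mul_I, arg_cos_add_sin_mul_I hx]
    _ = arg (((‖z‖⁻¹ : ℝ) : ℂ) * z) := by rw [mul_comm, h, div_eq_inv_mul, ofReal_inv]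
    _ = arg z := arg_real_mul z (by positivity)

theorem exp_I_mul_pi_add_arg_neg {z : ℂ} (hz : z ≠ 0) :
    exp (I * ((π + arg (-z) : ℝ) : ℂ)) = z / ((‖z‖ : ℝ) : ℂ) := by
  have hnorm : ((‖z‖ : ℝ) : ℂ) ≠ 0 := by simpa using hz
  have h := norm_mul_exp_arg_mul_I (-z)
  rw [norm_neg] at h
  have hrot : exp (I * ((π + arg (-z) : ℝ) : ℂ)) = -exp (arg (-z) * I) := by
    rw [show I * ((π + arg (-z) : ℝ) : ℂ) = arg (-z) * I + π * I by push_cast; ring, exp_add,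
      exp_pi_mul_I]
    ring
  rw [eq_div_iff hnorm, hrot]
  linear_combination -h

theorem IsPreconnected.eqOn_of_exp_I_mul_eq {X : Type*} [TopologicalSpace X] {s : Set X}
    (hs : IsPreconnected s) {f g : X → ℝ} (hf : ContinuousOn f s) (hg : ContinuousOn g s)
    (hfg : ∀ x ∈ s, exp (I * f x) = exp (I * g x)) {x₀ : X} (hx₀ : x₀ ∈ s)
    (h₀ : f x₀ = g x₀) : EqOn f g s := by
  have hmaps : MapsTo (f - g) s (AddSubgroup.zmultiples (2 * π)) := by
    intro x hx
    obtain ⟨k, hk⟩ := exp_eq_exp_iff_exists_int.1 (hfg x hx)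
    refine ⟨k, ?_⟩
    have : ((k • (2 * π) : ℝ) : ℂ) = ((f x - g x : ℝ) : ℂ) := by
      push_cast
      linear_combination (-I) * hk.symm + (k * 2 * π - f x + g x) * I_sq
    exact_mod_cast this
  intro x hx
  have := hs.constant_of_mapsTo (SetLike.isDiscrete_iff_discreteTopology.2 inferInstance)
    (hf.sub hg) hmaps hx hx₀
  simp only [Pi.sub_apply, h₀, sub_self] at this
  linarith

theorem iE_add_smul_mem_UHP {n : ℕ} {S : Matrix (Fin n) (Fin n) ℂ} (hS : S.IsHermitian) (t : ℝ) :
    iE n + (t : ℂ) • S ∈ UHP n := by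
  have hY : (2 * I)⁻¹ • (iE n + (t : ℂ) • S - (iE n + (t : ℂ) • S)ᴴ) = 1 := by
    rw [conjTranspose_add, conjTranspose_smul, hS.eq, iE, conjTranspose_smul, conjTranspose_one]
    simp only [star_def, conj_I, conj_ofReal]
    rw [add_sub_add_right_eq_sub, ← sub_smul, smul_smul, sub_neg_eq_add, ← two_mul,
      inv_mul_cancel₀ (by simp), one_smul]
  simpa only [UHP, mem_ofPred_eq, hY] using PosDef.one

theorem iE_mem_UHP (n : ℕ) : iE n ∈ UHP n := by
  simpa using iE_add_smul_mem_UHP (n := n) isHermitian_zero 0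

theorem mul_mem_UGrp {n : ℕ} {A B : HMat n} (hA : A ∈ UGrp n) (hB : B ∈ UGrp n) :
    A * B ∈ UGrp n := by
  simp only [UGrp, mem_ofPred_eq] at *
  calc (A * B)ᴴ * Imat n * (A * B) = Bᴴ * (Aᴴ * Imat n * A) * B := by
        simp only [conjTranspose_mul, Matrix.mul_assoc]
    _ = Imat n := by rw [hA, hB]

theorem Imat_mem_UGrp (n : ℕ) : Imat n ∈ UGrp n := by
  simp [UGrp, Imat, fromBlocks_conjTranspose, fromBlocks_multiply]

theorem fromBlocks_one_zero_one_mem_UGrp {n : ℕ} {S : Matrix (Fin n) (Fin n) ℂ}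
    (hS : S.IsHermitian) : fromBlocks 1 S 0 1 ∈ UGrp n := by
  simp [UGrp, Imat, fromBlocks_conjTranspose, fromBlocks_multiply, hS.eq]

theorem Jfac_Imat {n : ℕ} (Z : Matrix (Fin n) (Fin n) ℂ) : Jfac (Imat n) Z = Z.det := by
  simp [Jfac, Imat]

theorem Jfac_fromBlocks_one_zero_one {n : ℕ} (S Z : Matrix (Fin n) (Fin n) ℂ) :
    Jfac (fromBlocks 1 S 0 1) Z = 1 := by
  simp [Jfac]

theorem Jfac_Imat_mul_fromBlocks_one_zero_one {n : ℕ} (S Z : Matrix (Fin n) (Fin n) ℂ) :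
    Jfac (Imat n * fromBlocks 1 S 0 1) Z = (Z + S).det := by
  simp [Jfac, Imat, fromBlocks_multiply]

theorem matAct_fromBlocks_one_zero_one {n : ℕ} (S Z : Matrix (Fin n) (Fin n) ℂ) :
    matAct (fromBlocks 1 S 0 1) Z = Z + S := by
  simp [matAct]

theorem IsArgOfJ.apply_iE {n : ℕ} {L : HMat n → Matrix (Fin n) (Fin n) ℂ → ℝ}
    (hL : IsArgOfJ n L) {M : HMat n} (hM : M ∈ UGrp n) : L M (iE n) = arg (Jfac M (iE n)) :=
  eq_arg_of_exp_I_mul_eq (hL M hM).2.2 ((hL M hM).2.1 _ (iE_mem_UHP n))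

theorem IsArgOfJ.wcoc_Imat_fromBlocks_one_zero_one {n : ℕ}
    {L : HMat n → Matrix (Fin n) (Fin n) ℂ → ℝ} (hL : IsArgOfJ n L)
    {S : Matrix (Fin n) (Fin n) ℂ} (hS : S.IsHermitian) :
    wcoc L (Imat n) (fromBlocks 1 S 0 1) =
      (arg (iE n + S).det - L (Imat n) (iE n + S)) / (2 * π) := by
  have hM := fromBlocks_one_zero_one_mem_UGrp hS
  rw [wcoc, wAt, hL.apply_iE (mul_mem_UGrp (Imat_mem_UGrp n) hM), hL.apply_iE hM,
    Jfac_Imat_mul_fromBlocks_one_zero_one,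
    Jfac_fromBlocks_one_zero_one, matAct_fromBlocks_one_zero_one, arg_one, sub_zero]

theorem det_iE_two_add_smul (S : Matrix (Fin 2) (Fin 2) ℂ) (t : ℂ) :
    (iE 2 + t • S).det = t ^ 2 * S.det + t * S.trace * I - 1 := by
  simp [iE, det_fin_two, trace_fin_two]
  linear_combination I_sq

theorem Matrix.IsHermitian.det_iE_two_add_real_smul {S : Matrix (Fin 2) (Fin 2) ℂ}
    (hS : S.IsHermitian) (t : ℝ) :
    (iE 2 + (t : ℂ) • S).det =
      ⟨t ^ 2 * (hS.eigenvalues 0 * hS.eigenvalues 1) - 1,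
        t * (hS.eigenvalues 0 + hS.eigenvalues 1)⟩ := by
  rw [det_iE_two_add_smul, hS.det_eq_prod_eigenvalues, hS.trace_eq_sum_eigenvalues,
    Fin.prod_univ_two, Fin.sum_univ_two]
  apply Complex.ext <;> simp [pow_two]

theorem Matrix.IsHermitian.neg_det_iE_two_add_smul_mem_slitPlane
    {S : Matrix (Fin 2) (Fin 2) ℂ} (hS : S.IsHermitian) (t : ℝ) :
    -(iE 2 + (t : ℂ) • S).det ∈ slitPlane := by
  rw [hS.det_iE_two_add_real_smul, mem_slitPlane_iff]
  set a := hS.eigenvalues 0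
  set b := hS.eigenvalues 1
  simp only [neg_re, neg_im, ne_eq, neg_eq_zero, mul_eq_zero, not_or]
  by_cases h : t = 0 ∨ a + b = 0
  · left
    rcases h with rfl | hab
    · simp
    · rw [show b = -a by linarith]
      nlinarith [sq_nonneg (t * a)]
  · right
    tauto

theorem IsArgOfJ.Imat_iE_two_add {L : HMat 2 → Matrix (Fin 2) (Fin 2) ℂ → ℝ}
    (hL : IsArgOfJ 2 L) {S : Matrix (Fin 2) (Fin 2) ℂ} (hS : S.IsHermitian) :
    L (Imat 2) (iE 2 + S) = π + arg (-(iE 2 + S).det) := by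
  obtain ⟨hcont, hexp, -⟩ := hL _ (Imat_mem_UGrp 2)
  set p : ℝ → Matrix (Fin 2) (Fin 2) ℂ := fun t => iE 2 + (t : ℂ) • S
  have hp : Continuous p := by fun_prop
  have hslit := hS.neg_det_iE_two_add_smul_mem_slitPlane
  have hlift : EqOn (fun t => L (Imat 2) (p t)) (fun t => π + arg (-(p t).det)) univ := by
    refine isPreconnected_univ.eqOn_of_exp_I_mul_eq
      (hcont.comp_continuous hp (iE_add_smul_mem_UHP hS)).continuousOn ?_ ?_ (mem_univ 0) ?_
    · exact fun t _ => (continuousAt_const.add ((continuousAt_arg (hslit t)).comp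
        (f := fun t => -(p t).det) hp.matrix_det.neg.continuousAt)).continuousWithinAt
    · intro t _
      rw [hexp _ (iE_add_smul_mem_UHP hS t), Jfac_Imat,
        exp_I_mul_pi_add_arg_neg (neg_ne_zero.1 (slitPlane_ne_zero (hslit t)))]
    · have hdet : (iE 2).det = -1 := by simp [iE]
      simp [p, hL.apply_iE (Imat_mem_UGrp 2), Jfac_Imat, hdet]
  simpa [p] using hlift (mem_univ 1)

theorem arg_neg_eq_arg_sub_pi_of_nonneg_im {z : ℂ} (him : 0 ≤ z.im) (hz : -z ∈ slitPlane) :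
    arg (-z) = arg z - π := by
  rw [mem_slitPlane_iff, neg_re, neg_im, neg_pos, ne_eq, neg_eq_zero] at hz
  exact arg_neg_eq_arg_sub_pi_iff.2 <| by
    rcases him.lt_or_eq with h | h
    · exact .inl h
    · exact .inr ⟨h.symm, hz.resolve_right (not_not.2 h.symm)⟩

/-- for M = ((E,S),(0,E)) with S Hermitian, w(I,M) = 0 if tr S ≥ 0
and w(I,M) = -1 if tr S < 0. -/
theorem stmt6 (L : HMat 2 → Matrix (Fin 2) (Fin 2) ℂ → ℝ) (hL : IsArgOfJ 2 L)
    (S : Matrix (Fin 2) (Fin 2) ℂ) (hS : Sᴴ = S)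
    (M : HMat 2) (hM : M = Matrix.fromBlocks 1 S 0 1) :
    (0 ≤ S.trace.re → wcoc L (Imat 2) M = 0) ∧
    (S.trace.re < 0 → wcoc L (Imat 2) M = -1) := by
  subst hM
  have hSH : S.IsHermitian := hS
  set z := (iE 2 + S).det
  have hw : wcoc L (Imat 2) (fromBlocks 1 S 0 1) = (arg z - arg (-z) - π) / (2 * π) := by
    rw [hL.wcoc_Imat_fromBlocks_one_zero_one hSH, hL.Imat_iE_two_add hSH]
    ring
  have hz : -z ∈ slitPlane := by simpa using hSH.neg_det_iE_two_add_smul_mem_slitPlane 1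
  have him : z.im = S.trace.re := by
    have hdet := hSH.det_iE_two_add_real_smul 1
    rw [ofReal_one, one_smul] at hdet
    simp [z, hdet, hSH.trace_eq_sum_eigenvalues]
  refine ⟨fun htr => ?_, fun htr => ?_⟩
  · rw [hw, arg_neg_eq_arg_sub_pi_of_nonneg_im (him ▸ htr) hz]
    simp
  · rw [hw, arg_neg_eq_arg_add_pi_of_im_neg (him ▸ htr)]
    field_simp
    ring
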